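/- arXiv:1011.1288 — 2 statements merged into one kernel-verified Lean document; each statement's English description precedes it below -/
import Mathlib

section
/- Let X, Y be Banach spaces, F : X → Y continuous and Gâteaux-differentiable with F(0) = 0. Assume for every x with ‖x‖ ≤ R the derivative DF(x) has a right inverse L(x) : Y → X (i.e. DF(x) L(x) v = v for all v ∈ Y) with operator norm ‖L(x)‖ ≤ m. Then for every ȳ with ‖ȳ‖ < R/m and every μ > m there exists x̄ with ‖x̄‖ < R, ‖x̄‖ ≤ μ‖ȳ‖, and F(x̄) = ȳ. -/
/-!
Apply Ekeland's variational principle to `x ↦ ‖F x - ȳ‖` from `0`, with a slope `α` chosen so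
that `1 / μ ≤ α < 1 / m` and `‖ȳ‖ < α R`. The Ekeland point `z` satisfies `α ‖z‖ ≤ ‖ȳ‖`, so it
lies in the ball where `L` is available. If `F z ≠ ȳ`, moving from `z` in the direction
`L z (ȳ - F z)` decreases the residual at rate at least `1 / m > α` per unit of distance, which
the Ekeland inequality at `z` forbids.

Ekeland's principle itself comes from Cantor's intersection theorem: along a sequence of
approximate minimisers `xₙ`, the closed sets `{x | f x + α d(x, xₙ) ≤ f xₙ}` are nested with
diameters tending to `0`, and the point of their intersection is the Ekeland point.
-/

open Filter Topology Set Metric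

theorem exists_mem_forall_le_add {α : Type*} {f : α → ℝ} {s : Set α} (hs : s.Nonempty)
    (hf : BddBelow (f '' s)) {ε : ℝ} (hε : 0 < ε) : ∃ x ∈ s, ∀ w ∈ s, f x ≤ f w + ε := by
  obtain ⟨_, ⟨x, hx, rfl⟩, hlt⟩ := exists_lt_of_csInf_lt (hs.image f) (lt_add_of_pos_right _ hε)
  exact ⟨x, hx, fun w hw => by linarith [csInf_le hf (mem_image_of_mem f hw)]⟩

namespace Ekeland

variable {X : Type*} [MetricSpace X] {f : X → ℝ} {α : ℝ}

variable (f α) in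
def lowerSet (y : X) : Set X := {x | f x + α * dist x y ≤ f y}

theorem mem_lowerSet {x y : X} : x ∈ lowerSet f α y ↔ f x + α * dist x y ≤ f y := Iff.rfl

theorem mem_lowerSet_self (y : X) : y ∈ lowerSet f α y := by simp [mem_lowerSet]

theorem lowerSet_subset (hα : 0 ≤ α) {y w : X} (hy : y ∈ lowerSet f α w) :
    lowerSet f α y ⊆ lowerSet f α w := fun x hx => by
  rw [mem_lowerSet] at *
  nlinarith [dist_triangle x y w]

theorem isClosed_lowerSet (hf : LowerSemicontinuous f) (y : X) : IsClosed (lowerSet f α y) :=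
  (hf.add (continuous_const.mul (continuous_id.dist continuous_const)).lowerSemicontinuous
    ).isClosed_preimage (f y)

theorem lowerSet_subset_closedBall (hα : 0 < α) {x y : X} {ε : ℝ} (hx : x ∈ lowerSet f α y)
    (hε : ∀ w ∈ lowerSet f α y, f x ≤ f w + ε) : lowerSet f α x ⊆ closedBall x (ε / α) := by
  intro w hw
  have := hε w (lowerSet_subset hα.le hx hw)
  rw [mem_closedBall, le_div_iff₀' hα]
  exact (le_sub_iff_add_le'.2 hw).trans (by linarith)

theorem exists_forall_lt_add_dist [CompleteSpace X] (hf : LowerSemicontinuous f)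
    (hbdd : BddBelow (range f)) (hα : 0 < α) (x₀ : X) :
    ∃ z, α * dist z x₀ ≤ f x₀ - f z ∧ ∀ w ≠ z, f z < f w + α * dist w z := by
  have step (y : X) (n : ℕ) :
      ∃ x ∈ lowerSet f α y, ∀ w ∈ lowerSet f α y, f x ≤ f w + (1 / 2) ^ n :=
    exists_mem_forall_le_add ⟨y, mem_lowerSet_self y⟩ (hbdd.mono (image_subset_range _ _))
      (by positivity)
  choose next next_mem next_le using step
  let x : ℕ → X := fun n => Nat.rec x₀ (fun n xn => next xn n) n
  have hanti : Antitone fun n => lowerSet f α (x n) :=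
    antitone_nat_of_succ_le fun n => lowerSet_subset hα.le (next_mem _ _)
  have hball (n : ℕ) : lowerSet f α (x (n + 1)) ⊆ closedBall (x (n + 1)) ((1 / 2) ^ n / α) :=
    lowerSet_subset_closedBall hα (next_mem _ _) (next_le _ _)
  have hbounded (n : ℕ) : Bornology.IsBounded (lowerSet f α (x (n + 1))) :=
    isBounded_closedBall.subset (hball n)
  have hdiam : Tendsto (fun n => diam (lowerSet f α (x (n + 1)))) atTop (𝓝 0) := by
    refine squeeze_zero (fun n => diam_nonneg)
      (fun n => diam_le_of_subset_closedBall (by positivity) (hball n)) ?_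
    have h := ((tendsto_pow_atTop_nhds_zero_of_lt_one (r := (1 / 2 : ℝ)) (by norm_num)
      (by norm_num)).div_const α).const_mul 2
    simpa using h
  have hnested (N : ℕ) : (⋂ n ≤ N, lowerSet f α (x (n + 1))).Nonempty :=
    ⟨x (N + 1), mem_iInter₂.2 fun n hn =>
      hanti (by omega : n + 1 ≤ N + 1) (mem_lowerSet_self _)⟩
  obtain ⟨z, hz⟩ := nonempty_iInter_of_nonempty_biInter (fun n => isClosed_lowerSet hf _)
    hbounded hnested hdiam
  rw [mem_iInter] at hz
  refine ⟨z, ?_, fun w hw => ?_⟩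
  · have : z ∈ lowerSet f α x₀ := hanti (Nat.zero_le 1) (hz 0)
    rw [mem_lowerSet] at this
    linarith
  · by_contra! hwz
    have hw_mem (n : ℕ) : w ∈ lowerSet f α (x (n + 1)) := lowerSet_subset hα.le (hz n) hwz
    refine hw (dist_le_zero.1 (ge_of_tendsto' hdiam fun n => ?_))
    exact dist_le_diam_of_mem (hbounded n) (hw_mem n) (hz n)

end Ekeland

section InverseFunction

variable {X Y : Type*} [NormedAddCommGroup X] [NormedSpace ℝ X]
  [NormedAddCommGroup Y] [NormedSpace ℝ Y]

theorem norm_le_one_sub_mul_norm_add_mul_norm (p q : Y) {t : ℝ} (ht₀ : 0 < t)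
    (ht₁ : t ≤ 1) : ‖q‖ ≤ (1 - t) * ‖p‖ + t * ‖t⁻¹ • (q - p) + p‖ := by
  have hq : q = (1 - t) • p + t • (t⁻¹ • (q - p) + p) := by
    rw [smul_add, smul_inv_smul₀ ht₀.ne']
    module
  calc ‖q‖ = ‖(1 - t) • p + t • (t⁻¹ • (q - p) + p)‖ := congrArg norm hq
    _ ≤ ‖(1 - t) • p‖ + ‖t • (t⁻¹ • (q - p) + p)‖ := norm_add_le _ _
    _ = (1 - t) * ‖p‖ + t * ‖t⁻¹ • (q - p) + p‖ := by
      rw [norm_smul, norm_smul, Real.norm_of_nonneg (by linarith), Real.norm_of_nonneg ht₀.le]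

theorem eq_of_forall_norm_sub_le_norm_sub_add {F : X → Y} {z u : X} {y : Y} {α m : ℝ}
    (hα : 0 ≤ α) (hαm : α * m < 1)
    (hderiv : Tendsto (fun t : ℝ => t⁻¹ • (F (z + t • u) - F z)) (𝓝[>] 0) (𝓝 (y - F z)))
    (hu : ‖u‖ ≤ m * ‖y - F z‖) (hmin : ∀ w, ‖F z - y‖ ≤ ‖F w - y‖ + α * ‖w - z‖) :
    F z = y := by
  by_contra hne
  set p := F z - y with hp_def
  have hp : 0 < ‖p‖ := norm_pos_iff.2 (sub_ne_zero.2 hne)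
  have hu' : ‖u‖ ≤ m * ‖p‖ := by rwa [← norm_neg p, neg_sub]
  have hquot : Tendsto (fun t : ℝ => t⁻¹ • ((F (z + t • u) - y) - p) + p) (𝓝[>] 0) (𝓝 0) := by
    have h := hderiv.add_const p
    rw [← neg_sub, neg_add_cancel] at h
    simpa [hp_def] using h
  obtain ⟨t, hsmall, ht₀, ht₁⟩ := ((tendsto_zero_iff_norm_tendsto_zero.1 hquot).eventually
    (gt_mem_nhds (mul_pos (sub_pos.2 hαm) hp))).and (Ioc_mem_nhdsGT one_pos) |>.exists
  have hmin_t := hmin (z + t • u)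
  rw [add_sub_cancel_left, norm_smul, Real.norm_of_nonneg ht₀.le] at hmin_t
  have hdesc := norm_le_one_sub_mul_norm_add_mul_norm p (F (z + t • u) - y) ht₀ ht₁
  have : ‖p‖ < ‖p‖ := calc
    ‖p‖ ≤ ‖F (z + t • u) - y‖ + α * (t * ‖u‖) := hmin_t
    _ ≤ (1 - t) * ‖p‖ + t * ‖t⁻¹ • (F (z + t • u) - y - p) + p‖ + α * (t * (m * ‖p‖)) := by
      gcongr
    _ < (1 - t) * ‖p‖ + t * ((1 - α * m) * ‖p‖) + α * (t * (m * ‖p‖)) := by gcongr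
    _ = ‖p‖ := by ring
  exact lt_irrefl _ this

end InverseFunction

theorem stmt2_general (X Y : Type*) [NormedAddCommGroup X] [NormedSpace ℝ X] [CompleteSpace X]
    [NormedAddCommGroup Y] [NormedSpace ℝ Y]
    (F : X → Y) (DF : X → X →L[ℝ] Y) (L : X → Y →L[ℝ] X)
    (R m : ℝ) (hR : 0 < R) (hm : 0 < m)
    (hF0 : F 0 = 0) (hFc : Continuous F)
    (hDF : ∀ x u : X,
      Tendsto (fun t : ℝ => t⁻¹ • (F (x + t • u) - F x)) (𝓝[≠] 0) (𝓝 (DF x u)))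
    (hLinv : ∀ x : X, ‖x‖ ≤ R → ∀ v : Y, DF x (L x v) = v)
    (hLbound : ∀ x : X, ‖x‖ ≤ R → ‖L x‖ ≤ m)
    (ybar : Y) (hy : ‖ybar‖ < R / m) (μ : ℝ) (hμ : m < μ) :
    ∃ xbar : X, ‖xbar‖ < R ∧ ‖xbar‖ ≤ μ * ‖ybar‖ ∧ F xbar = ybar := by
  have hyR : ‖ybar‖ / R < m⁻¹ := by rwa [div_lt_iff₀ hR, ← div_eq_inv_mul]
  obtain ⟨α, hα_gt, hα_lt⟩ := exists_between (max_lt (inv_strictAnti₀ hm hμ) hyR)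
  rw [max_lt_iff] at hα_gt
  have hα : 0 < α := (inv_pos.2 (hm.trans hμ)).trans hα_gt.1
  obtain ⟨z, hz₀, hz⟩ := Ekeland.exists_forall_lt_add_dist (f := fun x => ‖F x - ybar‖)
    (hFc.sub continuous_const).norm.lowerSemicontinuous ⟨0, by rintro _ ⟨x, rfl⟩; positivity⟩ hα 0
  simp only [hF0, zero_sub, norm_neg, dist_zero_right] at hz₀
  have hαz : α * ‖z‖ ≤ ‖ybar‖ := by linarith [norm_nonneg (F z - ybar)]
  have hzR : ‖z‖ < R := by
    rw [div_lt_iff₀ hR] at hα_gt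
    nlinarith
  refine ⟨z, hzR, ?_, ?_⟩
  · rw [inv_lt_iff_one_lt_mul₀ (hm.trans hμ)] at hα_gt
    nlinarith [norm_nonneg z]
  · have hDFL : DF z (L z (ybar - F z)) = ybar - F z := hLinv z hzR.le _
    refine eq_of_forall_norm_sub_le_norm_sub_add (m := m) hα.le ?_
      (hDFL ▸ (hDF z _).mono_left (nhdsGT_le_nhdsNE 0)) ?_ fun w => ?_
    · rw [mul_comm, ← lt_inv_mul_iff₀ hm, mul_one]
      exact hα_lt
    · exact ((L z).le_opNorm _).trans
        (mul_le_mul_of_nonneg_right (hLbound z hzR.le) (norm_nonneg _))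
    · rcases eq_or_ne w z with rfl | hw
      · simp
      · simpa [dist_eq_norm] using (hz w hw).le

/-- Inverse function theorem in Banach spaces via Ekeland's variational principle. -/
theorem stmt2 (X Y : Type*) [NormedAddCommGroup X] [NormedSpace ℝ X] [CompleteSpace X]
    [NormedAddCommGroup Y] [NormedSpace ℝ Y] [CompleteSpace Y]
    (F : X → Y) (DF : X → X →L[ℝ] Y) (L : X → Y →L[ℝ] X)
    (R m : ℝ) (hR : 0 < R) (hm : 0 < m)
    (hF0 : F 0 = 0) (hFc : Continuous F)
    (hDF : ∀ x u : X,
      Tendsto (fun t : ℝ => t⁻¹ • (F (x + t • u) - F x)) (𝓝[≠] 0) (𝓝 (DF x u)))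
    (hLinv : ∀ x : X, ‖x‖ ≤ R → ∀ v : Y, DF x (L x v) = v)
    (hLbound : ∀ x : X, ‖x‖ ≤ R → ‖L x‖ ≤ m)
    (ybar : Y) (hy : ‖ybar‖ < R / m) (μ : ℝ) (hμ : m < μ) :
    ∃ xbar : X, ‖xbar‖ < R ∧ ‖xbar‖ ≤ μ * ‖ybar‖ ∧ F xbar = ybar :=
  stmt2_general X Y F DF L R m hR hm hF0 hFc hDF hLinv hLbound ybar hy μ hμ
end

section
/- In the setting of the Banach-space surjection theorem (F continuous, Gâteaux-differentiable, F(0)=0, DF(x) admitting a right inverse L(x) with ‖L(x)‖ ≤ m for ‖x‖ ≤ R), the point x̄ obtained from Ekeland's variational principle applied to f(x) = ‖F(x) − ȳ‖ with radius r = μ‖ȳ‖ satisfies: if F(x̄) ≠ ȳ then, taking u = −L(x̄)(F(x̄) − ȳ), one obtains ‖F(x̄) − ȳ‖ ≤ (m/μ)‖F(x̄) − ȳ‖, a contradiction when μ > m. -/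
open Filter Topology

/-- The key contradiction step: a point given by Ekeland's principle with
`F x̄ ≠ ȳ` satisfies `‖F x̄ − ȳ‖ ≤ (m/μ)‖F x̄ − ȳ‖`. -/
theorem stmt3 (X Y : Type*) [NormedAddCommGroup X] [NormedSpace ℝ X] [CompleteSpace X]
    [NormedAddCommGroup Y] [NormedSpace ℝ Y] [CompleteSpace Y]
    (F : X → Y) (DF : X → X →L[ℝ] Y) (L : X → Y →L[ℝ] X)
    (R m : ℝ) (hR : 0 < R) (hm : 0 < m)
    (hF0 : F 0 = 0) (hFc : Continuous F)
    (hDF : ∀ x u : X,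
      Tendsto (fun t : ℝ => t⁻¹ • (F (x + t • u) - F x)) (𝓝[≠] 0) (𝓝 (DF x u)))
    (hLinv : ∀ x : X, ‖x‖ ≤ R → ∀ v : Y, DF x (L x v) = v)
    (hLbound : ∀ x : X, ‖x‖ ≤ R → ‖L x‖ ≤ m)
    (ybar : Y) (μ : ℝ) (hμ : m < μ)
    (xbar : X) (hx : ‖xbar‖ < R)
    (hEkeland : ∀ x : X, ‖F x - ybar‖ ≥ ‖F xbar - ybar‖ - (1 / μ) * ‖x - xbar‖) :
    F xbar ≠ ybar → ‖F xbar - ybar‖ ≤ (m / μ) * ‖F xbar - ybar‖ := by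
  intro hne
  have hμ0 : (0:ℝ) < μ := hm.trans hμ
  set v := F xbar - ybar with hv
  have hxR : ‖xbar‖ ≤ R := hx.le
  set u := -(L xbar v) with hu
  have hDFu : DF xbar u = -v := by
    simp [hu, hLinv xbar hxR v]
  have hunorm : ‖u‖ ≤ m * ‖v‖ := by
    calc ‖u‖ = ‖L xbar v‖ := norm_neg _
    _ ≤ ‖L xbar‖ * ‖v‖ := (L xbar).le_opNorm v
    _ ≤ m * ‖v‖ := mul_le_mul_of_nonneg_right (hLbound xbar hxR) (norm_nonneg v)
  have htend := hDF xbar u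
  rw [hDFu] at htend
  have htend0 : Tendsto (fun t : ℝ =>
      ‖t⁻¹ • (F (xbar + t • u) - F xbar) + v‖) (𝓝[>] (0:ℝ)) (𝓝 0) := by
    have h1 : Tendsto (fun t : ℝ => t⁻¹ • (F (xbar + t • u) - F xbar) + v)
        (𝓝[≠] (0:ℝ)) (𝓝 0) := by
      have := htend.add_const v
      simpa using this
    have h2 := h1.norm
    simp only [norm_zero] at h2
    exact h2.mono_left (nhdsWithin_mono _ (fun t ht => ne_of_gt ht))
  have hev : ∀ᶠ t in 𝓝[>] (0:ℝ),
      ‖v‖ - ‖u‖ / μ ≤ ‖t⁻¹ • (F (xbar + t • u) - F xbar) + v‖ := by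
    filter_upwards [Ioo_mem_nhdsGT_of_mem (by simp : (0:ℝ) ∈ Set.Ico (0:ℝ) 1)]
      with t ht
    obtain ⟨ht0, ht1⟩ := ht
    set h := t⁻¹ • (F (xbar + t • u) - F xbar) with hh
    have key : F (xbar + t • u) - ybar = t • h + v := by
      rw [hh, smul_inv_smul₀ ht0.ne']
      abel_nf
      simp [hv]
      abel
    have hEk := hEkeland (xbar + t • u)
    rw [key] at hEk
    have hnorm_tu : ‖xbar + t • u - xbar‖ = t * ‖u‖ := by
      simp [norm_smul, abs_of_pos ht0]
    rw [hnorm_tu] at hEk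
    have hsplit : ‖t • h + v‖ ≤ (1 - t) * ‖v‖ + t * ‖h + v‖ := by
      have : t • h + v = (1 - t) • v + t • (h + v) := by
        simp [smul_add, sub_smul]; abel
      rw [this]
      calc ‖(1 - t) • v + t • (h + v)‖ ≤ ‖(1 - t) • v‖ + ‖t • (h + v)‖ := norm_add_le _ _
      _ = (1 - t) * ‖v‖ + t * ‖h + v‖ := by
          rw [norm_smul, norm_smul, Real.norm_eq_abs, Real.norm_eq_abs,
            abs_of_pos ht0, abs_of_pos (by linarith : (0:ℝ) < 1 - t)]
    have h3 : ‖v‖ - 1 / μ * (t * ‖u‖) ≤ (1 - t) * ‖v‖ + t * ‖h + v‖ :=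
      le_trans hEk hsplit
    have h4 : t * (‖v‖ - ‖u‖ / μ) ≤ t * ‖h + v‖ := by
      have e : 1 / μ * (t * ‖u‖) = t * (‖u‖ / μ) := by field_simp
      rw [e] at h3
      nlinarith
    exact le_of_mul_le_mul_left (by linarith) ht0
  have hle : ‖v‖ - ‖u‖ / μ ≤ 0 := ge_of_tendsto htend0 hev
  have : ‖v‖ ≤ ‖u‖ / μ := by linarith
  calc ‖v‖ ≤ ‖u‖ / μ := this
  _ ≤ m * ‖v‖ / μ := by gcongr
  _ = m / μ * ‖v‖ := by ring
end
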